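/- In the Black-Scholes setting, for fixed S, K, T > 0 and r, q ∈ ℝ, the function σ ↦ C(S,K,T,r,q,σ) is differentiable on (0, ∞) with ∂C/∂σ = S·exp(−q·T)·√T·φ(d1) (the option Vega); in particular Vega is strictly positive, so the call price is a strictly increasing function of the volatility σ. -/

import Mathlib

open Real

/-- Standard normal density. -/
noncomputable def stdNormalPdf (x : ℝ) : ℝ := Real.exp (-x ^ 2 / 2) / Real.sqrt (2 * Real.pi)

/-- Standard normal cumulative distribution function. -/
noncomputable def stdNormalCdf (x : ℝ) : ℝ := ∫ t in Set.Iic x, stdNormalPdf t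

/-- Black-Scholes `d₁`. -/
noncomputable def bsD1 (S K T r q σ : ℝ) : ℝ :=
  (Real.log (S / K) + (r - q + σ ^ 2 / 2) * T) / (σ * Real.sqrt T)

/-- Black-Scholes `d₂`. -/
noncomputable def bsD2 (S K T r q σ : ℝ) : ℝ := bsD1 S K T r q σ - σ * Real.sqrt T

/-- Black-Scholes call option price. -/
noncomputable def bsCall (S K T r q σ : ℝ) : ℝ :=
  S * Real.exp (-q * T) * stdNormalCdf (bsD1 S K T r q σ) -
    K * Real.exp (-r * T) * stdNormalCdf (bsD2 S K T r q σ)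

/-! Differentiating the two terms of `bsCall` by the chain rule gives
`S e^{-qT} φ(d₁) d₁' - K e^{-rT} φ(d₂) d₂'`. Since `d₁² - d₂² = 2 (log (S/K) + (r - q) T)`, the two
densities satisfy `K e^{-rT} φ(d₂) = S e^{-qT} φ(d₁)`, so the derivative collapses to
`S e^{-qT} φ(d₁) (d₁' - d₂') = S e^{-qT} φ(d₁) √T`, as `d₁ - d₂ = σ √T`. -/

open MeasureTheory ProbabilityTheory Set

theorem hasDerivAt_integral_Iic {E : Type*} [NormedAddCommGroup E] [NormedSpace ℝ E]
    [CompleteSpace E] {f : ℝ → E} {x : ℝ} (hf : Integrable f) (hfx : ContinuousAt f x) :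
    HasDerivAt (fun y => ∫ t in Iic y, f t) (f x) x := by
  have hsplit :
      (fun y => ∫ t in Iic y, f t) = fun y => (∫ t in Iic 0, f t) + ∫ t in 0..y, f t := by
    ext y
    rw [← intervalIntegral.integral_Iic_sub_Iic hf.integrableOn hf.integrableOn, add_sub_cancel]
  rw [hsplit]
  exact (intervalIntegral.integral_hasDerivAt_right (hf.intervalIntegrable)
    (hf.aestronglyMeasurable.stronglyMeasurableAtFilter) hfx).const_add _

theorem stdNormalPdf_eq_gaussianPDFReal : stdNormalPdf = gaussianPDFReal 0 1 := by
  ext x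
  simp [stdNormalPdf, gaussianPDFReal, div_eq_inv_mul]

theorem stdNormalPdf_pos (x : ℝ) : 0 < stdNormalPdf x := by
  unfold stdNormalPdf; positivity

theorem stdNormalPdf_eq_mul_exp (x y : ℝ) :
    stdNormalPdf y = stdNormalPdf x * exp ((x ^ 2 - y ^ 2) / 2) := by
  rw [stdNormalPdf, stdNormalPdf, div_mul_eq_mul_div, ← exp_add]
  ring_nf

theorem continuous_stdNormalPdf : Continuous stdNormalPdf := by
  unfold stdNormalPdf; fun_prop

theorem hasDerivAt_stdNormalCdf (x : ℝ) : HasDerivAt stdNormalCdf (stdNormalPdf x) x := by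
  refine hasDerivAt_integral_Iic ?_ continuous_stdNormalPdf.continuousAt
  rw [stdNormalPdf_eq_gaussianPDFReal]
  exact integrable_gaussianPDFReal 0 1

section BlackScholes

variable {S K T r q σ : ℝ}

theorem bsD1_mul (hσ : σ ≠ 0) (hT : 0 < T) :
    bsD1 S K T r q σ * (σ * √T) = log (S / K) + (r - q + σ ^ 2 / 2) * T :=
  div_mul_cancel₀ _ (by positivity)

theorem hasDerivAt_bsD1 (hσ : σ ≠ 0) (hT : 0 < T) :
    HasDerivAt (bsD1 S K T r q) (-bsD2 S K T r q σ / σ) σ := by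
  have hsqrtT : √T ≠ 0 := (sqrt_pos.2 hT).ne'
  have hnum : HasDerivAt (fun s => log (S / K) + (r - q + s ^ 2 / 2) * T) (σ * T) σ := by
    simpa using ((((hasDerivAt_pow 2 σ).div_const 2).const_add (r - q)).mul_const T).const_add
      (log (S / K))
  have hden : HasDerivAt (fun s => s * √T) √T σ := by simpa using (hasDerivAt_id σ).mul_const √T
  refine (hnum.div hden (mul_ne_zero hσ hsqrtT)).congr_deriv ?_
  unfold bsD2 bsD1
  field_simp
  rw [sq_sqrt hT.le]
  ring

theorem hasDerivAt_bsD2 (hσ : σ ≠ 0) (hT : 0 < T) :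
    HasDerivAt (bsD2 S K T r q) (-bsD1 S K T r q σ / σ) σ := by
  refine ((hasDerivAt_bsD1 hσ hT).sub ((hasDerivAt_id σ).mul_const √T)).congr_deriv ?_
  unfold bsD2; field_simp; ring

theorem sq_bsD1_sub_sq_bsD2 (hσ : σ ≠ 0) (hT : 0 < T) :
    bsD1 S K T r q σ ^ 2 - bsD2 S K T r q σ ^ 2 = 2 * (log (S / K) + (r - q) * T) := by
  rw [bsD2]
  linear_combination
    2 * bsD1_mul (S := S) (K := K) (r := r) (q := q) hσ hT - σ ^ 2 * sq_sqrt hT.le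

theorem strike_mul_stdNormalPdf_bsD2 (hS : 0 < S) (hK : 0 < K) (hσ : σ ≠ 0) (hT : 0 < T) :
    K * exp (-r * T) * stdNormalPdf (bsD2 S K T r q σ) =
      S * exp (-q * T) * stdNormalPdf (bsD1 S K T r q σ) := by
  rw [stdNormalPdf_eq_mul_exp (bsD1 S K T r q σ), sq_bsD1_sub_sq_bsD2 hσ hT,
    mul_div_cancel_left₀ _ two_ne_zero, exp_add, exp_log (div_pos hS hK)]
  have hdisc : exp (-r * T) * exp ((r - q) * T) = exp (-q * T) := by rw [← exp_add]; ring_nf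
  rw [← hdisc]
  field_simp

theorem hasDerivAt_bsCall (hS : 0 < S) (hK : 0 < K) (hσ : σ ≠ 0) (hT : 0 < T) :
    HasDerivAt (bsCall S K T r q)
      (S * exp (-q * T) * √T * stdNormalPdf (bsD1 S K T r q σ)) σ := by
  have hd1 : HasDerivAt (bsD1 S K T r q) _ σ := hasDerivAt_bsD1 hσ hT
  have hd2 : HasDerivAt (bsD2 S K T r q) _ σ := hasDerivAt_bsD2 hσ hT
  refine ((((hasDerivAt_stdNormalCdf _).comp σ hd1).const_mul (S * exp (-q * T))).sub
    (((hasDerivAt_stdNormalCdf _).comp σ hd2).const_mul (K * exp (-r * T)))).congr_deriv ?_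
  rw [← mul_assoc (K * _), strike_mul_stdNormalPdf_bsD2 hS hK hσ hT, bsD2]
  field_simp
  ring

end BlackScholes

/-- The Black-Scholes call price is differentiable in the volatility with
`∂C/∂σ = S·exp(-qT)·√T·φ(d₁)` (the Vega), which is strictly positive: the call
price is strictly increasing in the volatility. -/
theorem bsCall_vega (S K T r q : ℝ) (hS : 0 < S) (hK : 0 < K) (hT : 0 < T) :
    ∀ σ : ℝ, 0 < σ →
      HasDerivAt (fun s => bsCall S K T r q s)
        (S * Real.exp (-q * T) * Real.sqrt T * stdNormalPdf (bsD1 S K T r q σ)) σ ∧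
      0 < S * Real.exp (-q * T) * Real.sqrt T * stdNormalPdf (bsD1 S K T r q σ) := by
  intro σ hσ
  have hpdf := stdNormalPdf_pos (bsD1 S K T r q σ)
  exact ⟨hasDerivAt_bsCall hS hK hσ.ne' hT, by positivity⟩
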